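/- arXiv:1205.5009 — 4 statements merged into one kernel-verified Lean document; each statement's English description precedes it below -/
import Mathlib

section
/- Let K be a totally disconnected compact group, ψ: K → K a continuous surjective endomorphism, and U an open normal subgroup. Writing U₋ = C(ψ,U) = ⋂_{n≥0} ψ^{-n}(U), one has H_top(ψ,U) = log[ψ^{-1}(U₋) : U₋]. If moreover ψ is a topological automorphism and U₊ = ⋂_{n≥0} ψ^{n}(U), then [ψ^{-1}(U₋) : U₋] = [ψ(U₊) : U₊]. -/
/-!
Write `C n = ⋂_{i<n} ψ⁻ⁱ(U)`. Since `C (n+1) = U ∩ ψ⁻¹(C n)` and `ψ` is surjective,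
`[K : C (n+1)] = [K : C n] · [ψ⁻¹(C n) : U ∩ ψ⁻¹(C n)]`, and the last factor only depends on the
image of `ψ⁻¹(C n)` in the finite group `K/U`. These closed subgroups decrease to `ψ⁻¹(U₋)`, so by
compactness they eventually lie in the open subgroup `ψ⁻¹(U₋)·U`, and the factor stabilises at
`[ψ⁻¹(U₋) : U ∩ ψ⁻¹(U₋)] = [ψ⁻¹(U₋) : U₋]`; a Cesàro average of `log` of the factors then gives
`H_top`.

For an automorphism, `C n(ψ, U)` is the preimage of `C n(ψ⁻¹, U)` under `ψⁿ⁻¹`, so both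
sequences have the same indices and hence the same limit, while `C(ψ⁻¹, U) = U₊` and
`ψ⁻¹`-preimages are `ψ`-images.
-/

open Filter Topology

theorem tendsto_div_natCast_of_tendsto_sub_succ {u : ℕ → ℝ} {l : ℝ}
    (h : Tendsto (fun n => u (n + 1) - u n) atTop (𝓝 l)) :
    Tendsto (fun n : ℕ => u n / n) atTop (𝓝 l) := by
  have hsum := (tendsto_const_div_atTop_nhds_zero_nat (u 0)).add h.cesaro
  rw [zero_add] at hsum
  refine hsum.congr fun n => ?_
  rw [Finset.sum_range_sub]
  ring

namespace MulAut

theorem coe_pow {M : Type*} [Mul M] (e : MulAut M) (n : ℕ) : ⇑(e ^ n) = (⇑e)^[n] :=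
  congrArg DFunLike.coe (map_pow (toPerm (M := M)) e n)

end MulAut

namespace Subgroup

section Cotrajectory

variable {G : Type*} [Group G]

/-- `U.partialCotrajectory φ n` is `C_n(φ, U)` and `U.cotrajectory φ` is `C(φ, U)`. -/
def partialCotrajectory (U : Subgroup G) (φ : Monoid.End G) (n : ℕ) : Subgroup G :=
  ⨅ i ∈ Finset.range n, U.comap (φ ^ i : G →* G)

def cotrajectory (U : Subgroup G) (φ : Monoid.End G) : Subgroup G :=
  ⨅ i : ℕ, U.comap (φ ^ i : G →* G)

variable {U : Subgroup G} {φ : Monoid.End G}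

theorem mem_partialCotrajectory {n : ℕ} {x : G} :
    x ∈ U.partialCotrajectory φ n ↔ ∀ i < n, φ^[i] x ∈ U := by
  simp only [partialCotrajectory, mem_iInf, Finset.mem_range]
  rfl

theorem mem_cotrajectory {x : G} : x ∈ U.cotrajectory φ ↔ ∀ i, φ^[i] x ∈ U := by
  simp only [cotrajectory, mem_iInf]
  rfl

@[simp]
theorem partialCotrajectory_zero : U.partialCotrajectory φ 0 = ⊤ := by
  simp [partialCotrajectory]

theorem partialCotrajectory_succ (n : ℕ) :
    U.partialCotrajectory φ (n + 1) = U ⊓ (U.partialCotrajectory φ n).comap φ := by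
  ext x
  rw [mem_inf, mem_partialCotrajectory, Nat.forall_lt_succ_left]
  exact and_congr Iff.rfl mem_partialCotrajectory.symm

theorem cotrajectory_eq_inf_comap : U.cotrajectory φ = U ⊓ (U.cotrajectory φ).comap φ := by
  ext x
  rw [mem_inf, mem_cotrajectory, ← Nat.and_forall_add_one]
  exact and_congr Iff.rfl mem_cotrajectory.symm

theorem antitone_partialCotrajectory : Antitone (U.partialCotrajectory φ) :=
  fun _ _ hmn _ hx => mem_partialCotrajectory.2 fun i hi =>
    mem_partialCotrajectory.1 hx i (hi.trans_le hmn)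

theorem iInf_partialCotrajectory : ⨅ n, U.partialCotrajectory φ n = U.cotrajectory φ := by
  ext x
  simp only [mem_iInf, mem_partialCotrajectory, mem_cotrajectory]
  exact ⟨fun h i => h (i + 1) i i.lt_succ_self, fun h _ i _ => h i⟩

theorem index_partialCotrajectory_succ (hφ : Function.Surjective φ) (n : ℕ) :
    (U.partialCotrajectory φ (n + 1)).index =
      (U.partialCotrajectory φ n).index * U.relIndex ((U.partialCotrajectory φ n).comap φ) := by
  have hle : U.partialCotrajectory φ (n + 1) ≤ (U.partialCotrajectory φ n).comap φ :=
    (partialCotrajectory_succ n).trans_le inf_le_right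
  rw [← relIndex_mul_index hle, partialCotrajectory_succ, inf_relIndex_right,
    index_comap_of_surjective _ hφ, mul_comm]

theorem relIndex_cotrajectory_comap :
    (U.cotrajectory φ).relIndex ((U.cotrajectory φ).comap φ) =
      U.relIndex ((U.cotrajectory φ).comap φ) := by
  nth_rw 1 [cotrajectory_eq_inf_comap]
  exact inf_relIndex_right _ _

end Cotrajectory

section Inverse

variable {G : Type*} [Group G] {U : Subgroup G} {φ ψ : Monoid.End G}

theorem partialCotrajectory_succ_eq_comap (h : Function.LeftInverse φ ψ) (n : ℕ) :
    U.partialCotrajectory ψ (n + 1) =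
      (U.partialCotrajectory φ (n + 1)).comap (ψ ^ n : G →* G) := by
  have hcancel : ∀ j ≤ n, ∀ x, φ^[j] (ψ^[n] x) = ψ^[n - j] x := fun j hj x => by
    rw [← Nat.add_sub_cancel' hj, Function.iterate_add_apply, Nat.add_sub_cancel_left]
    exact h.iterate j _
  ext x
  refine mem_partialCotrajectory.trans (Iff.trans ?_ mem_partialCotrajectory.symm)
  change _ ↔ ∀ j < n + 1, φ^[j] (ψ^[n] x) ∈ U
  constructor
  · intro hx j hj
    rw [hcancel j (by omega)]
    exact hx _ (by omega)
  · intro hx i hi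
    have := hx (n - i) (by omega)
    rwa [hcancel _ (by omega), Nat.sub_sub_self (by omega)] at this

theorem index_partialCotrajectory_eq_of_leftInverse (h : Function.LeftInverse φ ψ)
    (hψ : Function.Surjective ψ) (n : ℕ) :
    (U.partialCotrajectory φ n).index = (U.partialCotrajectory ψ n).index := by
  cases n with
  | zero => simp
  | succ n =>
    rw [partialCotrajectory_succ_eq_comap h]
    exact (index_comap_of_surjective (f := (ψ ^ n : G →* G)) _ (hψ.iterate n)).symm

theorem iInf_map_pow_eq_cotrajectory (hl : Function.LeftInverse φ ψ)
    (hr : Function.RightInverse φ ψ) :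
    ⨅ i : ℕ, U.map (ψ ^ i : G →* G) = U.cotrajectory φ := by
  ext x
  rw [mem_iInf, mem_cotrajectory]
  refine forall_congr' fun i => ?_
  exact SetLike.ext_iff.1 (map_eq_comap_of_inverse (f := (ψ ^ i : G →* G))
    (g := (φ ^ i : G →* G)) (hl.iterate i) (hr.iterate i) U) x

end Inverse

section Topology

variable {G : Type*} [Group G] [TopologicalSpace G]

theorem isOpen_partialCotrajectory {U : Subgroup G} (hU : IsOpen (U : Set G)) {φ : Monoid.End G}
    (hφ : Continuous φ) (n : ℕ) : IsOpen (U.partialCotrajectory φ n : Set G) := by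
  have : (U.partialCotrajectory φ n : Set G) = ⋂ i ∈ Finset.range n, φ^[i] ⁻¹' U := by
    ext x
    simp [mem_partialCotrajectory]
  rw [this]
  exact isOpen_biInter_finset fun i _ => hU.preimage (hφ.iterate i)

variable [IsTopologicalGroup G] [CompactSpace G]

theorem finiteIndex_of_isOpen {H : Subgroup G} (hH : IsOpen (H : Set G)) : H.FiniteIndex :=
  have := H.quotient_finite_of_isOpen hH
  finiteIndex_of_finite_quotient

theorem relIndex_ne_zero_of_isOpen {U : Subgroup G} (hU : IsOpen (U : Set G)) (H : Subgroup G) :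
    U.relIndex H ≠ 0 :=
  have := finiteIndex_of_isOpen hU
  isFiniteRelIndex_of_finiteIndex.relIndex_ne_zero

theorem eventually_relIndex_eq_relIndex_iInf {U : Subgroup G} [U.Normal] (hU : IsOpen (U : Set G))
    {H : ℕ → Subgroup G} (hH : Antitone H) (hHc : ∀ n, IsClosed (H n : Set G)) :
    ∀ᶠ n in atTop, U.relIndex (H n) = U.relIndex (⨅ n, H n) := by
  set L := ⨅ n, H n
  -- `U` cannot distinguish `L` from the open subgroup `L ⊔ U`, into which some `H N` falls
  -- by compactness.
  have hW : IsOpen ((L ⊔ U : Subgroup G) : Set G) := isOpen_mono le_sup_right hU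
  obtain ⟨N, hN⟩ := exists_subset_nhds_of_isCompact' hH.directed_ge
    (fun n => (hHc n).isCompact) hHc fun x hx =>
      hW.mem_nhds (le_sup_left (a := L) (mem_iInf.2 (Set.mem_iInter.1 hx)))
  filter_upwards [eventually_ge_atTop N] with n hn
  refine le_antisymm ?_ (relIndex_le_of_le_right (iInf_le H n) (relIndex_ne_zero_of_isOpen hU _))
  calc U.relIndex (H n) ≤ U.relIndex (L ⊔ U) :=
        relIndex_le_of_le_right ((hH hn).trans hN) (relIndex_ne_zero_of_isOpen hU _)
    _ = U.relIndex L := relIndex_sup_right L U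

theorem tendsto_log_index_partialCotrajectory {U : Subgroup G} [U.Normal] (hU : IsOpen (U : Set G))
    {φ : Monoid.End G} (hφc : Continuous φ) (hφs : Function.Surjective φ) :
    Tendsto (fun n : ℕ => Real.log (U.partialCotrajectory φ n).index / n) atTop
      (𝓝 (Real.log ((U.cotrajectory φ).relIndex ((U.cotrajectory φ).comap φ)))) := by
  set C := U.partialCotrajectory φ
  have hstep : ∀ n, Real.log (C (n + 1)).index - Real.log (C n).index =
      Real.log (U.relIndex ((C n).comap φ)) := fun n => by
    have := finiteIndex_of_isOpen (isOpen_partialCotrajectory hU hφc n)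
    rw [index_partialCotrajectory_succ hφs, Nat.cast_mul,
      Real.log_mul (by exact_mod_cast FiniteIndex.index_ne_zero)
        (by exact_mod_cast relIndex_ne_zero_of_isOpen hU _), add_sub_cancel_left]
  have hlim : (U.cotrajectory φ).comap φ = ⨅ n, (C n).comap φ := by
    rw [← iInf_partialCotrajectory]
    exact comap_iInf _ _
  refine tendsto_div_natCast_of_tendsto_sub_succ ?_
  simp_rw [hstep]
  rw [relIndex_cotrajectory_comap, hlim]
  have hstable := eventually_relIndex_eq_relIndex_iInf hU (H := fun n => (C n).comap φ)
    (fun m n hmn => comap_mono (antitone_partialCotrajectory hmn))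
    fun n => ((C n).isClosed_of_isOpen (isOpen_partialCotrajectory hU hφc n)).preimage hφc
  exact tendsto_const_nhds.congr'
    (hstable.mono fun n hn => congrArg (fun k : ℕ => Real.log k) hn.symm)

theorem relIndex_cotrajectory_comap_eq_of_leftInverse {U : Subgroup G} [U.Normal]
    (hU : IsOpen (U : Set G)) {φ ψ : Monoid.End G} (hφ : Continuous φ) (hψ : Continuous ψ)
    (hψs : Function.Surjective ψ) (h : Function.LeftInverse φ ψ) :
    (U.cotrajectory ψ).relIndex ((U.cotrajectory ψ).comap ψ) =
      (U.cotrajectory φ).relIndex ((U.cotrajectory φ).comap φ) := by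
  have hψlim := tendsto_log_index_partialCotrajectory hU hψ hψs
  have hφlim := tendsto_log_index_partialCotrajectory hU hφ h.surjective
  simp_rw [index_partialCotrajectory_eq_of_leftInverse h hψs] at hφlim
  have hpos : ∀ χ : Monoid.End G,
      (0 : ℝ) < (U.cotrajectory χ).relIndex ((U.cotrajectory χ).comap χ) := fun χ => by
    rw [relIndex_cotrajectory_comap]
    exact_mod_cast Nat.pos_of_ne_zero (relIndex_ne_zero_of_isOpen hU _)
  exact Nat.cast_injective
    (Real.log_injOn_pos (hpos ψ) (hpos φ) (tendsto_nhds_unique hψlim hφlim))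

end Topology
end Subgroup

theorem statement11_general {K : Type*} [Group K] [TopologicalSpace K] [IsTopologicalGroup K]
    [CompactSpace K]
    (ψ : Monoid.End K) (hψ : Continuous ψ) (hsurj : Function.Surjective ψ)
    (U : Subgroup K) [U.Normal] (hU : IsOpen (U : Set K))
    (Um : Subgroup K) (hUm : Um = ⨅ i : ℕ, U.comap (ψ ^ i : K →* K)) :
    Tendsto
      (fun n : ℕ =>
        Real.log ((⨅ i ∈ Finset.range n, U.comap (ψ ^ i : K →* K) : Subgroup K).index) / n)
      atTop (𝓝 (Real.log (Um.relIndex (Um.comap (ψ : K →* K))))) ∧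
    (∀ e : MulAut K, (e : K →* K) = (ψ : K →* K) → Continuous (e⁻¹ : MulAut K) →
      Um.relIndex (Um.comap (ψ : K →* K)) =
        (⨅ i : ℕ, U.map ((e ^ i : MulAut K) : K →* K) : Subgroup K).relIndex
          ((⨅ i : ℕ, U.map ((e ^ i : MulAut K) : K →* K) : Subgroup K).map (e : K →* K))) := by
  subst hUm
  refine ⟨Subgroup.tendsto_log_index_partialCotrajectory hU hψ hsurj, fun e he he_inv => ?_⟩
  let φ : Monoid.End K := ((e⁻¹ : MulAut K) : K →* K)
  have hψe : ∀ x, ψ x = e x := fun x => (DFunLike.congr_fun he x).symm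
  have hl : Function.LeftInverse φ ψ := fun x => by
    change e⁻¹ (ψ x) = x
    rw [hψe, MulAut.inv_apply_self]
  have hr : Function.RightInverse φ ψ := fun x => by
    change ψ (e⁻¹ x) = x
    rw [hψe, MulAut.apply_inv_self]
  have hmap : ⨅ i : ℕ, U.map ((e ^ i : MulAut K) : K →* K) = ⨅ i : ℕ, U.map (ψ ^ i : K →* K) :=
    iInf_congr fun i => congrArg (U.map ·) <| MonoidHom.ext fun x => by
      change (e ^ i) x = ψ^[i] x
      rw [MulAut.coe_pow, funext hψe]
  rw [he, Subgroup.map_eq_comap_of_inverse hl hr, hmap,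
    Subgroup.iInf_map_pow_eq_cotrajectory hl hr]
  exact Subgroup.relIndex_cotrajectory_comap_eq_of_leftInverse hU he_inv hψ hsurj hl

/-- `K` totally disconnected compact group, `ψ` continuous surjective
endomorphism, `U` open normal subgroup, `U₋ = C(ψ,U) = ⋂_{n≥0} ψ^{-n}(U)`.  Then
`H_top(ψ,U) = log[ψ^{-1}(U₋) : U₋]`; moreover if `ψ` is a topological automorphism and
`U₊ = ⋂_{n≥0} ψ^n(U)`, then `[ψ^{-1}(U₋) : U₋] = [ψ(U₊) : U₊]`. -/
theorem statement11 {K : Type*} [Group K] [TopologicalSpace K] [IsTopologicalGroup K]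
    [CompactSpace K] [TotallyDisconnectedSpace K]
    (ψ : Monoid.End K) (hψ : Continuous ψ) (hsurj : Function.Surjective ψ)
    (U : Subgroup K) [U.Normal] (hU : IsOpen (U : Set K))
    (Um : Subgroup K) (hUm : Um = ⨅ i : ℕ, U.comap (ψ ^ i : K →* K)) :
    Tendsto
      (fun n : ℕ =>
        Real.log ((⨅ i ∈ Finset.range n, U.comap (ψ ^ i : K →* K) : Subgroup K).index) / n)
      atTop (𝓝 (Real.log (Um.relIndex (Um.comap (ψ : K →* K))))) ∧
    (∀ e : MulAut K, (e : K →* K) = (ψ : K →* K) → Continuous (e⁻¹ : MulAut K) →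
      Um.relIndex (Um.comap (ψ : K →* K)) =
        (⨅ i : ℕ, U.map ((e ^ i : MulAut K) : K →* K) : Subgroup K).relIndex
          ((⨅ i : ℕ, U.map ((e ^ i : MulAut K) : K →* K) : Subgroup K).map (e : K →* K))) :=
  statement11_general ψ hψ hsurj U hU Um hUm
end

section
/- Let K be a totally disconnected compact group, ψ: K → K a continuous endomorphism, and U an open normal subgroup of K with trivial ψ-cotrajectory C(ψ,U) = {1}. If the cokernel K/Im ψ is finite, then H_top(ψ,U) = log|ker ψ| − log|K/Im ψ|. In particular |ker ψ| ≥ |K/Im ψ| and ker ψ is finite. -/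
/-!
Write `C n = ⋂_{i<n} ψ⁻ⁱ(U)`, so that `C (n+1) = U ∩ ψ⁻¹(C n)` and `⋂ₙ C n = C(ψ,U) = 1`.
Since `ker ψ ∩ U ⊆ C(ψ,U)`, the kernel meets `U` trivially and so embeds in the finite set `K/U`.
The `C n` are closed and decrease to `1`, so by compactness they eventually lie in the open
subgroup `Im ψ`, and the `ψ⁻¹(C n)`, which decrease to `ker ψ`, eventually lie in the open set
`(ker ψ) U`. From then on `ker ψ` is a transversal of `U ∩ ψ⁻¹(C n)` in `ψ⁻¹(C n)`, whence
`[K : C (n+1)] [K : Im ψ] = |ker ψ| [K : C n]`: the logarithm of the index grows linearly with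
slope `log |ker ψ| - log [K : Im ψ]`, which is therefore nonnegative.
-/

open Filter Topology Pointwise

theorem Filter.Tendsto.div_natCast_of_tendsto_sub {u : ℕ → ℝ} {L : ℝ}
    (h : Tendsto (fun n => u (n + 1) - u n) atTop (𝓝 L)) :
    Tendsto (fun n : ℕ => u n / n) atTop (𝓝 L) := by
  have hmean : Tendsto (fun n : ℕ => (n : ℝ)⁻¹ * (u n - u 0)) atTop (𝓝 L) := by
    simpa only [Finset.sum_range_sub] using h.cesaro
  have hsum := hmean.add (tendsto_const_div_atTop_nhds_zero_nat (u 0))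
  rw [add_zero] at hsum
  refine hsum.congr fun n => ?_
  rw [inv_mul_eq_div, ← add_div, sub_add_cancel]

theorem tendsto_log_div_of_eventually_mul_eq {a : ℕ → ℕ} {c k : ℕ} (ha : ∀ n, a n ≠ 0)
    (hc : c ≠ 0) (hk : k ≠ 0) (h : ∀ᶠ n in atTop, a (n + 1) * c = k * a n) :
    Tendsto (fun n : ℕ => Real.log (a n) / n) atTop (𝓝 (Real.log k - Real.log c)) := by
  refine Tendsto.div_natCast_of_tendsto_sub (tendsto_const_nhds.congr' ?_)
  filter_upwards [h] with n hn
  have hlog := congrArg (fun m : ℕ => Real.log m) hn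
  simp only [Nat.cast_mul] at hlog
  rw [Real.log_mul (by exact_mod_cast ha _) (by exact_mod_cast hc),
    Real.log_mul (by exact_mod_cast hk) (by exact_mod_cast ha _)] at hlog
  linarith

theorem Antitone.eventually_subset_of_iInter_subset {X ι : Type*} [TopologicalSpace X]
    [CompactSpace X] [Preorder ι] [IsDirected ι (· ≤ ·)] [Nonempty ι] {A : ι → Set X}
    (hA : Antitone A) (hclosed : ∀ i, IsClosed (A i)) {V : Set X} (hV : IsOpen V)
    (hsub : ⋂ i, A i ⊆ V) : ∀ᶠ i in atTop, A i ⊆ V := by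
  obtain ⟨i, hi⟩ := exists_subset_nhds_of_compactSpace hA.directed_ge hclosed
    fun x hx => hV.mem_nhds (hsub hx)
  exact eventually_atTop.2 ⟨i, fun j hj => (hA hj).trans hi⟩

namespace Subgroup

variable {G : Type*} [Group G]

theorem finiteIndex_of_isOpen_s13 [TopologicalSpace G] [SeparatelyContinuousMul G] [CompactSpace G]
    (V : Subgroup G) (hV : IsOpen (V : Set G)) : V.FiniteIndex :=
  have := V.quotient_finite_of_isOpen hV
  finiteIndex_of_finite_quotient

theorem relIndex_eq_card_of_subset_mul {N U D : Subgroup G} (hND : N ≤ D)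
    (hD : (D : Set G) ⊆ N * U) (hNU : N ⊓ U = ⊥) : U.relIndex D = Nat.card N := by
  rw [relIndex, index_eq_card]
  refine (Nat.card_eq_of_bijective
    (fun x : N => (QuotientGroup.mk ⟨x, hND x.2⟩ : D ⧸ U.subgroupOf D)) ⟨?_, ?_⟩).symm
  · intro a b hab
    have hmem : (a : G)⁻¹ * b ∈ N ⊓ U :=
      ⟨N.mul_mem (N.inv_mem a.2) b.2, by simpa [mem_subgroupOf] using QuotientGroup.eq.mp hab⟩
    rw [hNU, mem_bot, inv_mul_eq_one] at hmem
    exact Subtype.ext hmem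
  · rintro ⟨⟨d, hd⟩⟩
    obtain ⟨a, ha, u, hu, rfl⟩ := hD hd
    exact ⟨⟨a, ha⟩, QuotientGroup.eq.mpr (by simpa [mem_subgroupOf] using hu)⟩

theorem card_ne_zero_of_inf_eq_bot {N U : Subgroup G} [U.FiniteIndex] (hNU : N ⊓ U = ⊥) :
    Nat.card N ≠ 0 := by
  rw [← relIndex_eq_card_of_subset_mul le_rfl (fun x hx => ⟨x, hx, 1, U.one_mem, mul_one x⟩) hNU]
  exact (U.isFiniteRelIndex_of_finiteIndex (K := N)).relIndex_ne_zero

theorem index_inf_comap_mul_index_range {H : Type*} [Group H] (f : G →* H) (U : Subgroup G)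
    (V : Subgroup H) (hV : V ≤ f.range) (hsub : (V.comap f : Set G) ⊆ f.ker * U)
    (hker : f.ker ⊓ U = ⊥) :
    (U ⊓ V.comap f).index * f.range.index = Nat.card f.ker * V.index := by
  have hcomap : (V.comap f).index * f.range.index = V.index := by
    rw [index_comap, relIndex_mul_index hV]
  rw [← relIndex_mul_index (inf_le_right : U ⊓ V.comap f ≤ _), inf_relIndex_right,
    relIndex_eq_card_of_subset_mul (f.ker_le_comap V) hsub hker, mul_assoc, hcomap]

end Subgroup

namespace Monoid.End

variable {G : Type*} [Group G]

def partialCotrajectory (ψ : Monoid.End G) (U : Subgroup G) (n : ℕ) : Subgroup G :=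
  ⨅ i ∈ Finset.range n, U.comap (ψ ^ i : G →* G)

section Group

variable (ψ : Monoid.End G) (U : Subgroup G)

theorem partialCotrajectory_zero : partialCotrajectory ψ U 0 = ⊤ := by
  simp [partialCotrajectory]

theorem partialCotrajectory_succ (n : ℕ) :
    partialCotrajectory ψ U (n + 1) = U ⊓ (partialCotrajectory ψ U n).comap (ψ : G →* G) := by
  ext x
  simp only [partialCotrajectory, Subgroup.mem_iInf, Finset.mem_range, Subgroup.mem_inf,
    Nat.forall_lt_succ_left']
  erw [Subgroup.mem_comap, Subgroup.mem_iInf]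
  simp only [Subgroup.mem_iInf]
  exact Iff.rfl

theorem antitone_partialCotrajectory : Antitone (partialCotrajectory ψ U) :=
  fun _ _ hmn => biInf_mono fun _ hi => Finset.range_mono hmn hi

theorem iInf_partialCotrajectory :
    ⨅ n, partialCotrajectory ψ U n = ⨅ i, U.comap (ψ ^ i : G →* G) :=
  le_antisymm (le_iInf fun i => (iInf_le _ (i + 1)).trans (biInf_le _ (by simp)))
    (le_iInf fun _ => le_iInf₂ fun i _ => iInf_le _ i)

theorem ker_inf_le_iInf_comap_pow :
    (ψ : G →* G).ker ⊓ U ≤ ⨅ i, U.comap (ψ ^ i : G →* G) := by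
  refine le_iInf fun i x hx => ?_
  cases i with
  | zero => exact hx.2
  | succ i =>
    have hψx : ψ x = 1 := hx.1
    show (ψ ^ i) (ψ x) ∈ U
    rw [hψx, map_one]
    exact U.one_mem

end Group

section Topological

variable [TopologicalSpace G] {ψ : Monoid.End G} {U : Subgroup G}

theorem isOpen_partialCotrajectory (hψ : Continuous ψ) (hU : IsOpen (U : Set G)) (n : ℕ) :
    IsOpen (partialCotrajectory ψ U n : Set G) := by
  induction n with
  | zero => simp [partialCotrajectory_zero]
  | succ n ih =>
    rw [partialCotrajectory_succ, Subgroup.coe_inf]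
    exact hU.inter (ih.preimage hψ)

variable [IsTopologicalGroup G] [CompactSpace G]

theorem eventually_preimage_partialCotrajectory_subset (hψ : Continuous ψ)
    (hU : IsOpen (U : Set G)) (hC : ⨅ i, U.comap (ψ ^ i : G →* G) = ⊥) {f : G → G}
    (hf : Continuous f) {V : Set G} (hV : IsOpen V) (hfV : f ⁻¹' {1} ⊆ V) :
    ∀ᶠ n in atTop, f ⁻¹' (partialCotrajectory ψ U n : Set G) ⊆ V := by
  have hanti : Antitone fun n => f ⁻¹' (partialCotrajectory ψ U n : Set G) :=
    fun _ _ h => Set.preimage_mono (antitone_partialCotrajectory ψ U h)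
  refine hanti.eventually_subset_of_iInter_subset
    (fun n => (Subgroup.isClosed_of_isOpen _ (isOpen_partialCotrajectory hψ hU n)).preimage hf)
    hV ?_
  rwa [← Set.preimage_iInter, ← Subgroup.coe_iInf, (iInf_partialCotrajectory ψ U).trans hC,
    Subgroup.coe_bot]

theorem eventually_index_partialCotrajectory_succ_mul_index_range (hψ : Continuous ψ)
    (hU : IsOpen (U : Set G)) (hC : ⨅ i, U.comap (ψ ^ i : G →* G) = ⊥)
    (hrange : IsOpen ((ψ : G →* G).range : Set G)) :
    ∀ᶠ n in atTop, (partialCotrajectory ψ U (n + 1)).index * (ψ : G →* G).range.index =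
      Nat.card (ψ : G →* G).ker * (partialCotrajectory ψ U n).index := by
  have hle_range := eventually_preimage_partialCotrajectory_subset hψ hU hC continuous_id hrange
    (by simp [one_mem])
  have hsub_mul := eventually_preimage_partialCotrajectory_subset hψ hU hC hψ hU.mul_left
    fun x hx => ⟨x, hx, 1, one_mem U, mul_one x⟩
  filter_upwards [hle_range, hsub_mul] with n hn hn'
  rw [partialCotrajectory_succ]
  exact Subgroup.index_inf_comap_mul_index_range _ U _ hn hn'
    (le_bot_iff.1 (hC ▸ ker_inf_le_iInf_comap_pow ψ U))

end Topological

end Monoid.End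

open Monoid.End in
theorem statement13_general {K : Type*} [Group K] [TopologicalSpace K] [IsTopologicalGroup K]
    [CompactSpace K] [TotallyDisconnectedSpace K]
    (ψ : Monoid.End K) (hψ : Continuous ψ)
    (U : Subgroup K) (hU : IsOpen (U : Set K))
    (hC : (⨅ i : ℕ, U.comap (ψ ^ i : K →* K)) = (⊥ : Subgroup K))
    (hcoker : (ψ : K →* K).range.index ≠ 0) :
    Tendsto
      (fun n : ℕ =>
        Real.log ((⨅ i ∈ Finset.range n, U.comap (ψ ^ i : K →* K) : Subgroup K).index) / n)
      atTop
      (𝓝 (Real.log (Nat.card (ψ : K →* K).ker) - Real.log ((ψ : K →* K).range.index))) ∧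
    (ψ : K →* K).range.index ≤ Nat.card (ψ : K →* K).ker ∧
    ((ψ : K →* K).ker : Set K).Finite := by
  have := U.finiteIndex_of_isOpen_s13 hU
  have hcard : Nat.card (ψ : K →* K).ker ≠ 0 :=
    Subgroup.card_ne_zero_of_inf_eq_bot (le_bot_iff.1 (hC ▸ ker_inf_le_iInf_comap_pow ψ U))
  have : (ψ : K →* K).range.FiniteIndex := ⟨hcoker⟩
  have hrec := eventually_index_partialCotrajectory_succ_mul_index_range hψ hU hC
    (Subgroup.isOpen_of_isClosed_of_finiteIndex _ (isCompact_range hψ).isClosed)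
  have hlim := tendsto_log_div_of_eventually_mul_eq
    (fun n => ((partialCotrajectory ψ U n).finiteIndex_of_isOpen_s13
      (isOpen_partialCotrajectory hψ hU n)).index_ne_zero) hcoker hcard hrec
  refine ⟨hlim, ?_, Set.finite_coe_iff.1 (Nat.finite_of_card_ne_zero hcard)⟩
  have hlog := ge_of_tendsto' hlim fun n => div_nonneg (Real.log_natCast_nonneg _) n.cast_nonneg
  exact_mod_cast (Real.log_le_log_iff (by positivity) (by positivity)).1 (sub_nonneg.1 hlog)

/-- `K` totally disconnected compact group, `ψ` continuous endomorphism, `U`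
open normal subgroup with trivial cotrajectory `C(ψ,U) = ⋂_{n≥0} ψ^{-n}(U) = {1}`.  If the
cokernel `K/Im ψ` is finite, then `H_top(ψ,U) = log|ker ψ| − log|K/Im ψ|`; in particular
`|ker ψ| ≥ |K/Im ψ|` and `ker ψ` is finite. -/
theorem statement13 {K : Type*} [Group K] [TopologicalSpace K] [IsTopologicalGroup K]
    [CompactSpace K] [TotallyDisconnectedSpace K]
    (ψ : Monoid.End K) (hψ : Continuous ψ)
    (U : Subgroup K) [U.Normal] (hU : IsOpen (U : Set K))
    (hC : (⨅ i : ℕ, U.comap (ψ ^ i : K →* K)) = (⊥ : Subgroup K))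
    (hcoker : (ψ : K →* K).range.index ≠ 0) :
    Tendsto
      (fun n : ℕ =>
        Real.log ((⨅ i ∈ Finset.range n, U.comap (ψ ^ i : K →* K) : Subgroup K).index) / n)
      atTop
      (𝓝 (Real.log (Nat.card (ψ : K →* K).ker) - Real.log ((ψ : K →* K).range.index))) ∧
    (ψ : K →* K).range.index ≤ Nat.card (ψ : K →* K).ker ∧
    ((ψ : K →* K).ker : Set K).Finite :=
  statement13_general ψ hψ U hU hC hcoker
end

section
/- Let G be a torsion abelian group, φ: G → G an endomorphism, F a finite subgroup, K = Ĝ, ψ = φ̂, U = F^⊥. Then ker φ ∩ T(φ,F) is isomorphic to K/(Im ψ + C(ψ,U)), and T(φ,F)/φ(T(φ,F)) is isomorphic to ψ^{-1}(C(ψ,U))/C(ψ,U). -/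
/-!
The cotrajectory `C` is the annihilator `T^⊥` of the trajectory, because
`(φⁱ F)^⊥ = (ψⁱ)⁻¹(F^⊥)`, and `ψ⁻¹(C) = φ(T)^⊥`. The circle is divisible, so characters of
subgroups of the discrete group `G` extend to `G`. Hence `(ker φ ∩ T)^⊥ = Im ψ · T^⊥` (a character
killing `ker φ ∩ T` factors through `φ` on `T`), `Ĝ/(ker φ ∩ T)^⊥` is the dual of `ker φ ∩ T`, and
`φ(T)^⊥/T^⊥` is the dual of `T/φ(T)`. Both groups are finite, hence isomorphic to their duals:
`T = F · φ(T)` makes `T/φ(T)` an image of `F`, and each partial trajectory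
`S = F · φ(F) ⋯ φⁿ⁻¹(F)` satisfies `S ⊆ F · φ(S)`, so `|S| ≤ |F| |φ(S)| = |F| |S| / |ker φ ∩ S|`,
which bounds `|ker φ ∩ T|` by `|F|`.
-/

/-- The annihilator `H^⊥` of a subgroup `H` of `G` in the Pontryagin dual of `G`. -/
def annih {G : Type*} [CommGroup G] [TopologicalSpace G] (H : Subgroup G) :
    Subgroup (PontryaginDual G) where
  carrier := {χ | ∀ x ∈ H, χ x = 1}
  one_mem' := fun x _ => rfl
  mul_mem' := by
    intro χ ξ hχ hξ x hx
    show χ x * ξ x = 1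
    rw [hχ x hx, hξ x hx, mul_one]
  inv_mem' := by
    intro χ hχ x hx
    show (χ x)⁻¹ = 1
    rw [hχ x hx, inv_one]

noncomputable instance : DivisibleBy (Additive Circle) ℤ :=
  (Additive.ofMul.surjective.comp Circle.exp_surjective).divisibleBy Circle.expHom
    fun x n => map_zsmul Circle.expHom n x

theorem Circle.exists_comp_eq_of_ker_le {A B : Type*} [CommGroup A] [CommGroup B]
    (f : A →* B) (χ : A →* Circle) (h : f.ker ≤ χ.ker) : ∃ g : B →* Circle, g.comp f = χ := by
  obtain ⟨g, hg⟩ := (Module.Baer.of_divisible (Additive Circle)).extension_property_addMonoidHom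
    (QuotientGroup.kerLift f).toAdditive (QuotientGroup.kerLift_injective f)
    (QuotientGroup.lift f.ker χ h).toAdditive
  refine ⟨MonoidHom.toAdditive.symm g, MonoidHom.ext fun a => ?_⟩
  exact congrArg Additive.toMul (DFunLike.congr_fun hg (QuotientGroup.mk a : A ⧸ f.ker))

theorem MonoidHom.nonempty_quotient_ker_mulEquiv_of_surjective {A Q : Type*} [Group A]
    [CommGroup Q] [Finite Q] (r : A →* (Q →* Circle)) (hr : Function.Surjective r) :
    Nonempty (A ⧸ r.ker ≃* Q) :=
  ⟨(QuotientGroup.quotientKerEquivOfSurjective r hr).trans <| MonoidHom.toHomUnitsMulEquiv.trans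
    (CommGroup.monoidHom_mulEquiv_of_hasEnoughRootsOfUnity Q Circle).some⟩

theorem Set.finite_of_forall_finite_subset_ncard_le {α : Type*} {s : Set α} (B : ℕ)
    (h : ∀ t ⊆ s, t.Finite → t.ncard ≤ B) : s.Finite := by
  by_contra hs
  obtain ⟨t, hts, htfin, htcard⟩ := Set.Infinite.exists_subset_ncard_eq hs (B + 1)
  have := h t hts htfin
  omega

namespace Subgroup

section

variable {G G' : Type*} [Group G] [Group G']

instance finite_map (f : G →* G') (H : Subgroup G) [Finite H] : Finite (H.map f) :=
  inferInstanceAs (Finite ↥(f '' (H : Set G)))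

theorem card_ker_inf_mul_card_map (f : G →* G') (S : Subgroup G) :
    Nat.card ↥(f.ker ⊓ S) * Nat.card (S.map f) = Nat.card S := by
  rw [← relIndex_ker, relIndex, ← inf_subgroupOf_right,
    ← Nat.card_congr (subgroupOfEquivOfLe inf_le_right).toEquiv]
  exact card_mul_index _

end

variable {G : Type*} [CommGroup G]

instance finite_sup (H K : Subgroup G) [Finite H] [Finite K] : Finite ↥(H ⊔ K) :=
  (mul_normal H K ▸ (Set.toFinite (H : Set G)).mul (Set.toFinite (K : Set G))).to_subtype

theorem card_sup_le (H K : Subgroup G) : Nat.card ↥(H ⊔ K) ≤ Nat.card H * Nat.card K := by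
  have h := Set.natCard_mul_le (s := (H : Set G)) (t := K)
  rw [← mul_normal] at h
  exact h

end Subgroup

section PartialTrajectory

variable {G : Type*} [CommGroup G] (f : G →* G) (F : Subgroup G)

/-- `partialTrajectory f F n = F ⊔ f F ⊔ ⋯ ⊔ fⁿ⁻¹ F`. -/
def partialTrajectory : ℕ → Subgroup G
  | 0 => ⊥
  | n + 1 => F ⊔ (partialTrajectory n).map f

theorem partialTrajectory_mono : Monotone (partialTrajectory f F) := by
  refine monotone_nat_of_le_succ fun n => ?_
  induction n with
  | zero => exact bot_le
  | succ n ih => exact sup_le_sup_left (Subgroup.map_mono ih) F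

theorem finite_partialTrajectory [Finite F] (n : ℕ) : Finite (partialTrajectory f F n) := by
  induction n with
  | zero => exact inferInstanceAs (Finite (⊥ : Subgroup G))
  | succ n ih => exact Subgroup.finite_sup _ _

theorem card_ker_inf_le_of_le_sup_map [Finite F] (S : Subgroup G) [Finite S]
    (hS : S ≤ F ⊔ S.map f) : Nat.card ↥(f.ker ⊓ S) ≤ Nat.card F := by
  refine Nat.le_of_mul_le_mul_right ?_ (Nat.card_pos (α := S.map f))
  calc Nat.card ↥(f.ker ⊓ S) * Nat.card (S.map f)
      = Nat.card S := Subgroup.card_ker_inf_mul_card_map f S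
    _ ≤ Nat.card ↥(F ⊔ S.map f) := Subgroup.card_le_of_le hS
    _ ≤ Nat.card F * Nat.card (S.map f) := Subgroup.card_sup_le _ _

theorem card_ker_inf_partialTrajectory_le [Finite F] (n : ℕ) :
    Nat.card ↥(f.ker ⊓ partialTrajectory f F n) ≤ Nat.card F :=
  have := finite_partialTrajectory f F n
  card_ker_inf_le_of_le_sup_map f F _ (partialTrajectory_mono f F n.le_succ)

end PartialTrajectory

section Trajectory

variable {G : Type*} [CommGroup G] (φ : Monoid.End G) (F : Subgroup G)

def trajectory : Subgroup G :=
  ⨆ i : ℕ, F.map (φ ^ i : G →* G)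

theorem Subgroup.map_end_pow_zero : F.map (φ ^ 0 : G →* G) = F :=
  Subgroup.map_id F

theorem Subgroup.map_map_end_pow (H : Subgroup G) (i : ℕ) :
    (H.map (φ ^ i : G →* G)).map (φ : G →* G) = H.map (φ ^ (i + 1) : G →* G) :=
  (Subgroup.map_map H _ _).trans (congrArg (H.map ·) (pow_succ' φ i).symm)

theorem le_trajectory : F ≤ trajectory φ F :=
  le_iSup_of_le 0 (Subgroup.map_end_pow_zero φ F).ge

theorem map_trajectory_le : (trajectory φ F).map (φ : G →* G) ≤ trajectory φ F :=
  (Subgroup.map_iSup _ _).trans_le <| iSup_le fun i => (Subgroup.map_map_end_pow φ F i).trans_le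
    (le_iSup (fun i => F.map (φ ^ i : G →* G)) (i + 1))

theorem trajectory_eq_sup_map : trajectory φ F = F ⊔ (trajectory φ F).map (φ : G →* G) := by
  refine le_antisymm (iSup_le fun i => ?_) (sup_le (le_trajectory φ F) (map_trajectory_le φ F))
  cases i with
  | zero => exact (Subgroup.map_end_pow_zero φ F).trans_le le_sup_left
  | succ i =>
    rw [← Subgroup.map_map_end_pow]
    exact le_sup_of_le_right (Subgroup.map_mono (le_iSup (fun i => F.map (φ ^ i : G →* G)) i))

theorem map_pow_le_partialTrajectory (i : ℕ) :
    F.map (φ ^ i : G →* G) ≤ partialTrajectory φ F (i + 1) := by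
  induction i with
  | zero => exact (Subgroup.map_end_pow_zero φ F).trans_le le_sup_left
  | succ i ih =>
    rw [← Subgroup.map_map_end_pow]
    exact le_sup_of_le_right (Subgroup.map_mono ih)

theorem exists_subset_partialTrajectory {t : Set G} (ht : t.Finite)
    (htT : t ⊆ trajectory φ F) : ∃ n, t ⊆ partialTrajectory φ F n := by
  have hmem : ∀ x ∈ trajectory φ F, ∃ n, x ∈ partialTrajectory φ F n := fun x hx =>
    (Subgroup.mem_iSup_of_directed (partialTrajectory_mono φ F).directed_le).1 <|
      iSup_le (fun i => (map_pow_le_partialTrajectory φ F i).trans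
        (le_iSup (partialTrajectory φ F) (i + 1))) hx
  refine ((Filter.eventually_all_finite ht).2 fun x hx => ?_).exists (f := Filter.atTop)
  obtain ⟨n, hn⟩ := hmem x (htT hx)
  exact Filter.eventually_atTop.2 ⟨n, fun m hm => partialTrajectory_mono φ F hm hn⟩

theorem finite_ker_inf_trajectory [Finite F] : Finite ↥((φ : G →* G).ker ⊓ trajectory φ F) := by
  refine (Set.finite_of_forall_finite_subset_ncard_le (Nat.card F) fun t ht htfin => ?_).to_subtype
  obtain ⟨n, hn⟩ := exists_subset_partialTrajectory φ F htfin (ht.trans inf_le_right)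
  have := finite_partialTrajectory φ F n
  calc t.ncard = Nat.card t := (Nat.card_coe_set_eq t).symm
    _ ≤ Nat.card ↥((φ : G →* G).ker ⊓ partialTrajectory φ F n) :=
      Nat.card_mono ((Set.toFinite (partialTrajectory φ F n : Set G)).subset fun x hx => hx.2)
        fun x hx => ⟨(ht hx).1, hn hx⟩
    _ ≤ Nat.card F := card_ker_inf_partialTrajectory_le φ F n

theorem finite_quotient_map_trajectory [Finite F] :
    Finite (trajectory φ F ⧸ ((trajectory φ F).map (φ : G →* G)).subgroupOf (trajectory φ F)) := by
  set T := trajectory φ F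
  have hT : (T.map (φ : G →* G)).relIndex T ≠ 0 := by
    rw [congrArg (Subgroup.relIndex _) (trajectory_eq_sup_map φ F), Subgroup.relIndex_sup_right]
    exact Subgroup.FiniteIndex.index_ne_zero
  have : ((T.map (φ : G →* G)).subgroupOf T).FiniteIndex := ⟨hT⟩
  infer_instance

end Trajectory

section Annihilator

variable {G G' : Type*} [CommGroup G] [TopologicalSpace G] [CommGroup G'] [TopologicalSpace G']

theorem exists_pontryaginDual_comp_eq_of_ker_le [DiscreteTopology G'] {A : Type*} [CommGroup A]
    (f : A →* G') (χ : A →* Circle) (h : f.ker ≤ χ.ker) :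
    ∃ ξ : PontryaginDual G', (ξ : G' →* Circle).comp f = χ :=
  let ⟨g, hg⟩ := Circle.exists_comp_eq_of_ker_le f χ h
  ⟨⟨g, continuous_of_discreteTopology⟩, hg⟩

theorem mem_annih_iff_le_ker {H : Subgroup G} {χ : PontryaginDual G} :
    χ ∈ annih H ↔ H ≤ (χ : G →* Circle).ker :=
  Iff.rfl

theorem annih_iSup {ι : Sort*} (H : ι → Subgroup G) : annih (⨆ i, H i) = ⨅ i, annih (H i) := by
  ext χ
  simp only [Subgroup.mem_iInf, mem_annih_iff_le_ker, iSup_le_iff]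

theorem annih_map {f : G →* G'} {ψ : PontryaginDual G' →* PontryaginDual G}
    (hψ : ∀ χ x, ψ χ x = χ (f x)) (H : Subgroup G) : annih (H.map f) = (annih H).comap ψ := by
  ext χ
  simp only [Subgroup.mem_comap, mem_annih_iff_le_ker, Subgroup.map_le_iff_le_comap]
  exact forall₂_congr fun x _ => by simp [hψ]

theorem annih_ker_inf [DiscreteTopology G'] {f : G →* G'}
    {ψ : PontryaginDual G' →* PontryaginDual G} (hψ : ∀ χ x, ψ χ x = χ (f x)) (T : Subgroup G) :
    annih (f.ker ⊓ T) = ψ.range ⊔ annih T := by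
  refine le_antisymm (fun χ hχ => ?_) (sup_le ?_ fun χ hχ x hx => hχ x hx.2)
  · obtain ⟨ξ, hξ⟩ := exists_pontryaginDual_comp_eq_of_ker_le (f.comp T.subtype)
      ((χ : G →* Circle).comp T.subtype) fun x hx => hχ x ⟨hx, x.2⟩
    have hχψξ : χ * (ψ ξ)⁻¹ ∈ annih T := fun x hx => by
      have hξx : ξ (f x) = χ x := DFunLike.congr_fun hξ ⟨x, hx⟩
      show χ x * (ψ ξ x)⁻¹ = 1
      rw [hψ, hξx, mul_inv_cancel]
    rw [← inv_mul_cancel_right χ (ψ ξ)]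
    exact mul_mem (Subgroup.mem_sup_right hχψξ) (Subgroup.mem_sup_left ⟨ξ, rfl⟩)
  · rintro _ ⟨ξ, rfl⟩ x ⟨hx, -⟩
    simp [hψ, MonoidHom.mem_ker.1 hx]

end Annihilator

section Restriction

variable {G : Type*} [CommGroup G] [TopologicalSpace G]

noncomputable def restrictDual (H : Subgroup G) : PontryaginDual G →* (H →* Circle) where
  toFun χ := (χ : G →* Circle).comp H.subtype
  map_one' := rfl
  map_mul' _ _ := rfl

theorem ker_restrictDual (H : Subgroup G) : (restrictDual H).ker = annih H := by
  ext χ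
  simp only [MonoidHom.mem_ker, DFunLike.ext_iff, Subtype.forall]
  rfl

theorem restrictDual_surjective [DiscreteTopology G] (H : Subgroup G) :
    Function.Surjective (restrictDual H) := fun χ =>
  exists_pontryaginDual_comp_eq_of_ker_le H.subtype χ (by simp)

theorem nonempty_mulEquiv_quotient_annih [DiscreteTopology G] (H : Subgroup G) [Finite H] :
    Nonempty (H ≃* PontryaginDual G ⧸ annih H) :=
  let ⟨e⟩ := (restrictDual H).nonempty_quotient_ker_mulEquiv_of_surjective
    (restrictDual_surjective H)
  ⟨((QuotientGroup.quotientMulEquivOfEq (ker_restrictDual H)).symm.trans e).symm⟩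

noncomputable def restrictDualQuotient (H L : Subgroup G) :
    annih H →* (L ⧸ H.subgroupOf L →* Circle) where
  toFun χ := QuotientGroup.lift _ ((χ.1 : G →* Circle).comp L.subtype) fun x hx => χ.2 x hx
  map_one' := by ext ⟨x⟩; rfl
  map_mul' _ _ := by ext ⟨x⟩; rfl

theorem ker_restrictDualQuotient (H L : Subgroup G) :
    (restrictDualQuotient H L).ker = (annih L).subgroupOf (annih H) := by
  ext χ
  rw [MonoidHom.mem_ker, Subgroup.mem_subgroupOf]
  constructor
  · intro h x hx
    exact DFunLike.congr_fun h (QuotientGroup.mk ⟨x, hx⟩)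
  · intro h
    ext x : 2
    exact h x x.2

theorem restrictDualQuotient_surjective [DiscreteTopology G] {H L : Subgroup G} (hHL : H ≤ L) :
    Function.Surjective (restrictDualQuotient H L) := by
  intro q
  obtain ⟨ξ, hξ⟩ := exists_pontryaginDual_comp_eq_of_ker_le L.subtype
    (q.comp (QuotientGroup.mk' _)) (by simp)
  have hξH : ξ ∈ annih H := fun x hx => by
    rw [show ξ x = q (QuotientGroup.mk ⟨x, hHL hx⟩) from DFunLike.congr_fun hξ ⟨x, hHL hx⟩,
      (QuotientGroup.eq_one_iff (⟨x, hHL hx⟩ : L)).2 hx, map_one]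
  refine ⟨⟨ξ, hξH⟩, ?_⟩
  ext x : 2
  exact DFunLike.congr_fun hξ x

theorem nonempty_quotient_mulEquiv_annih_quotient [DiscreteTopology G] {H L : Subgroup G}
    (hHL : H ≤ L) [Finite (L ⧸ H.subgroupOf L)] :
    Nonempty ((L ⧸ H.subgroupOf L) ≃* (annih H ⧸ (annih L).subgroupOf (annih H))) :=
  let ⟨e⟩ := (restrictDualQuotient H L).nonempty_quotient_ker_mulEquiv_of_surjective
    (restrictDualQuotient_surjective hHL)
  ⟨((QuotientGroup.quotientMulEquivOfEq (ker_restrictDualQuotient H L)).symm.trans e).symm⟩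

end Restriction

section DualTrajectory

variable {G : Type*} [CommGroup G] [TopologicalSpace G] {φ : Monoid.End G}
  {ψ : Monoid.End (PontryaginDual G)}

theorem pow_apply_apply_of_dual (hψ : ∀ χ x, ψ χ x = χ (φ x)) (n : ℕ)
    (χ : PontryaginDual G) (x : G) : (ψ ^ n) χ x = χ ((φ ^ n) x) := by
  induction n generalizing χ with
  | zero => rfl
  | succ n ih =>
    rw [Monoid.End.coe_pow, Function.iterate_succ_apply, ← Monoid.End.coe_pow, ih, hψ,
      Monoid.End.coe_pow, Monoid.End.coe_pow, Function.iterate_succ_apply']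

theorem annih_trajectory (hψ : ∀ χ x, ψ χ x = χ (φ x)) (F : Subgroup G) :
    annih (trajectory φ F) = ⨅ i : ℕ, (annih F).comap (ψ ^ i : _ →* _) := by
  rw [trajectory, annih_iSup]
  exact iInf_congr fun i => annih_map (pow_apply_apply_of_dual hψ i) F

end DualTrajectory

theorem statement16_general {G : Type*} [CommGroup G] [TopologicalSpace G] [DiscreteTopology G]
    (φ : Monoid.End G) (F : Subgroup G) (hFfin : (F : Set G).Finite)
    (ψ : Monoid.End (PontryaginDual G))
    (hψ : ψ = (PontryaginDual.map ⟨(φ : G →* G), continuous_of_discreteTopology⟩ :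
      ContinuousMonoidHom (PontryaginDual G) (PontryaginDual G)).toMonoidHom)
    (T : Subgroup G) (hT : T = ⨆ i : ℕ, F.map (φ ^ i : G →* G))
    (C : Subgroup (PontryaginDual G))
    (hC : C = ⨅ i : ℕ, (annih F).comap (ψ ^ i : _ →* _)) :
    Nonempty
      ((((φ : G →* G).ker ⊓ T : Subgroup G)) ≃*
        (PontryaginDual G ⧸ ((ψ : _ →* _).range ⊔ C))) ∧
    Nonempty
      ((T ⧸ ((T.map (φ : G →* G)).subgroupOf T)) ≃*
        ((C.comap (ψ : _ →* _)) ⧸ (C.subgroupOf (C.comap (ψ : _ →* _))))) := by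
  have hψφ : ∀ χ x, ψ χ x = χ (φ x) := by
    subst hψ
    exact fun _ _ => rfl
  have : Finite F := hFfin.to_subtype
  obtain rfl : T = trajectory φ F := hT
  obtain rfl : C = annih (trajectory φ F) := hC.trans (annih_trajectory hψφ F).symm
  have := finite_ker_inf_trajectory φ F
  have := finite_quotient_map_trajectory φ F
  obtain ⟨e⟩ := nonempty_mulEquiv_quotient_annih ((φ : G →* G).ker ⊓ trajectory φ F)
  refine ⟨⟨e.trans (QuotientGroup.quotientMulEquivOfEq (annih_ker_inf hψφ _))⟩, ?_⟩
  rw [← annih_map hψφ]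
  exact nonempty_quotient_mulEquiv_annih_quotient (map_trajectory_le φ F)

/-- `G` (discrete) torsion abelian, `φ` an endomorphism, `F` finite subgroup,
`K = Ĝ`, `ψ = φ̂`, `U = F^⊥`, `T = T(φ,F)`, `C = C(ψ,U)`.  Then
`ker φ ∩ T ≅ K/(Im ψ · C)` and `T/φ(T) ≅ ψ^{-1}(C)/C`. -/
theorem statement16 {G : Type*} [CommGroup G] [TopologicalSpace G] [DiscreteTopology G]
    (hTor : Monoid.IsTorsion G)
    (φ : Monoid.End G) (F : Subgroup G) (hFfin : (F : Set G).Finite)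
    (ψ : Monoid.End (PontryaginDual G))
    (hψ : ψ = (PontryaginDual.map ⟨(φ : G →* G), continuous_of_discreteTopology⟩ :
      ContinuousMonoidHom (PontryaginDual G) (PontryaginDual G)).toMonoidHom)
    (T : Subgroup G) (hT : T = ⨆ i : ℕ, F.map (φ ^ i : G →* G))
    (C : Subgroup (PontryaginDual G))
    (hC : C = ⨅ i : ℕ, (annih F).comap (ψ ^ i : _ →* _)) :
    Nonempty
      ((((φ : G →* G).ker ⊓ T : Subgroup G)) ≃*
        (PontryaginDual G ⧸ ((ψ : _ →* _).range ⊔ C))) ∧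
    Nonempty
      ((T ⧸ ((T.map (φ : G →* G)).subgroupOf T)) ≃*
        ((C.comap (ψ : _ →* _)) ⧸ (C.subgroupOf (C.comap (ψ : _ →* _))))) :=
  statement16_general φ F hFfin ψ hψ T hT C hC
end

section
/- Let K be a totally disconnected compact group and ψ: K → K a topological automorphism such that the pair (K,ψ) has finite depth, i.e., there exists an open subgroup U with ⋂_{n∈ℤ} ψ^n(U) = {1}. Then h_top(ψ) = log depth(ψ), where depth(ψ) = [ψ(U₊) : U₊] for U₊ = ⋂_{n≥0} ψ^n(U) and any antistable open normal subgroup U. -/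
/-!
Fix an open normal subgroup `W` and put `C_n = ⋂_{i<n} ψ⁻ⁱ(W)`. Since `C_{n+1} = C_n ∩ ψ⁻ⁿ(W)`,
applying `ψⁿ` gives `[C_n : C_{n+1}] = [D_n : W ∩ D_n]` with `D_n = ψ(W) ∩ ⋯ ∩ ψⁿ(W)`. By
normality this is `[W D_n : W]`; the open subgroups `W D_n` decrease to `W ψ(W₊)`, so by
compactness they are eventually equal to it, and the ratio stabilises at `[ψ(W₊) : W₊]`. Hence
`[K : C_n]` grows geometrically and `H_top(ψ, W) = log [ψ(W₊) : W₊]`.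

For the supremum: `H_top(ψ, ·)` is antitone, and antistability plus compactness puts
`U_m = ⋂_{|i| ≤ m} ψⁱ(U)` inside any open `V` for large `m`. Each `U_m` is open and normal with
`(U_m)₊ = ψ⁻ᵐ(U₊)`, so it has the same depth as `U`.
-/

open Filter Topology Set

section Compact

variable {G : Type*} [Group G] [TopologicalSpace G] [CompactSpace G]

theorem Subgroup.index_ne_zero_of_isOpen [SeparatelyContinuousMul G] {H : Subgroup G}
    (hH : IsOpen (H : Set G)) : H.index ≠ 0 :=
  have := H.quotient_finite_of_isOpen hH
  index_ne_zero_of_finite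

theorem Subgroup.exists_le_of_iInf_le {D : ℕ → Subgroup G} (hD : Antitone D)
    (hDc : ∀ n, IsClosed (D n : Set G)) {V : Subgroup G} (hV : IsOpen (V : Set G))
    (h : ⨅ n, D n ≤ V) : ∃ n, D n ≤ V :=
  exists_subset_nhds_of_isCompact' (V := fun n => (D n : Set G))
    (hD.directed_ge.mono_comp _ fun _ _ h => h) (fun n => (hDc n).isCompact) hDc
    fun x hx => hV.mem_nhds (h (by simpa [Subgroup.mem_iInf] using hx))

theorem Subgroup.eventually_relIndex_eq_relIndex_iInf_s18 [SeparatelyContinuousMul G]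
    {W : Subgroup G} [W.Normal] (hW : IsOpen (W : Set G)) {D : ℕ → Subgroup G} (hD : Antitone D)
    (hDc : ∀ n, IsClosed (D n : Set G)) :
    ∀ᶠ n in atTop, W.relIndex (D n) = W.relIndex (⨅ n, D n) := by
  obtain ⟨N, hN⟩ := exists_le_of_iInf_le hD hDc (isOpen_mono le_sup_right hW)
    (le_sup_left : ⨅ n, D n ≤ (⨅ n, D n) ⊔ W)
  filter_upwards [eventually_ge_atTop N] with n hn
  have hsup : D n ⊔ W = (⨅ n, D n) ⊔ W :=
    le_antisymm (sup_le ((hD hn).trans hN) le_sup_right) (sup_le_sup_right (iInf_le _ n) W)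
  rw [← relIndex_sup_right, hsup, relIndex_sup_right]

end Compact

theorem Real.tendsto_log_div_of_eventually_mul {a : ℕ → ℝ} {e : ℝ} (ha : ∀ n, 0 < a n)
    (he : ∀ᶠ n in atTop, a (n + 1) = e * a n) :
    Tendsto (fun n : ℕ => Real.log (a n) / n) atTop (𝓝 (Real.log e)) := by
  obtain ⟨N, hN⟩ := eventually_atTop.mp he
  have hgeom : ∀ n ≥ N, a n * e ^ N = a N * e ^ n := by
    intro n hn
    induction n, hn using Nat.le_induction with
    | base => rfl
    | succ n hn ih => rw [hN n hn, pow_succ, ← mul_assoc, ← ih]; ring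
  have he₀ : 0 < e := by
    have := ha (N + 1)
    rw [hN N le_rfl] at this
    exact pos_of_mul_pos_left this (ha N).le
  have hlog : ∀ n ≥ N, n ≠ 0 →
      Real.log (a n) / n = Real.log e + (Real.log (a N) - N * Real.log e) / n := by
    intro n hn hn₀
    have := congrArg Real.log (hgeom n hn)
    rw [Real.log_mul (ha n).ne' (by positivity), Real.log_mul (ha N).ne' (by positivity),
      Real.log_pow, Real.log_pow] at this
    field_simp
    linarith
  have hlim := (tendsto_const_div_atTop_nhds_zero_nat (Real.log (a N) - N * Real.log e)).const_add
    (Real.log e)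
  rw [add_zero] at hlim
  refine hlim.congr' ?_
  filter_upwards [eventually_ge_atTop N, eventually_ne_atTop 0] with n hn hn₀
  exact (hlog n hn hn₀).symm

namespace MulAut

section Cotrajectory

variable {K : Type*} [Group K] (ψ : MulAut K) (W : Subgroup K)

/-- `⋂_{j ∈ s} ψ⁻ʲ(W)`: the paper's `C_n(ψ, W)` is `s = [0, n)`, and `W₊ = ⋂_{n ≥ 0} ψⁿ(W)` is
`s = (-∞, 0]`. -/
def cotrajectory (s : Set ℤ) : Subgroup K :=
  ⨅ j ∈ s, W.comap ((ψ ^ j : MulAut K) : K →* K)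

def positivePart : Subgroup K :=
  ⨅ n : ℕ, W.map ((ψ ^ n : MulAut K) : K →* K)

/-- `[ψ(W₊) : W₊]`, as `relIndex H L = [L : H ⊓ L]` and `W₊ ≤ ψ(W₊)`. -/
noncomputable def depth : ℕ :=
  (positivePart ψ W).relIndex ((positivePart ψ W).map (ψ : K →* K))

variable {ψ W}

theorem mem_cotrajectory {s : Set ℤ} {x : K} :
    x ∈ cotrajectory ψ W s ↔ ∀ j ∈ s, (ψ ^ j) x ∈ W := by
  simp [cotrajectory, Subgroup.mem_iInf]

instance [W.Normal] (s : Set ℤ) : (cotrajectory ψ W s).Normal :=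
  Subgroup.normal_iInf_normal fun j => Subgroup.normal_iInf_normal fun _ => .comap ‹_› _

theorem cotrajectory_anti {s t : Set ℤ} (h : s ⊆ t) :
    cotrajectory ψ W t ≤ cotrajectory ψ W s :=
  iInf_le_iInf_of_subset h

theorem cotrajectory_insert (j : ℤ) (s : Set ℤ) :
    cotrajectory ψ W (insert j s) =
      W.comap ((ψ ^ j : MulAut K) : K →* K) ⊓ cotrajectory ψ W s :=
  iInf_insert ..

theorem cotrajectory_insert_zero (s : Set ℤ) :
    cotrajectory ψ W (insert 0 s) = W ⊓ cotrajectory ψ W s := by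
  rw [cotrajectory_insert, zpow_zero]
  rfl

theorem cotrajectory_iUnion {ι : Sort*} (s : ι → Set ℤ) :
    cotrajectory ψ W (⋃ i, s i) = ⨅ i, cotrajectory ψ W (s i) :=
  iInf_iUnion ..

theorem cotrajectory_zero : cotrajectory ψ W {0} = W := by
  ext
  simp [mem_cotrajectory]

theorem iInf_range_comap_pow (n : ℕ) :
    ⨅ i ∈ Finset.range n, W.comap ((ψ ^ i : MulAut K) : K →* K) =
      cotrajectory ψ W (Ico 0 n) := by
  ext x
  simp only [Subgroup.mem_iInf, Subgroup.mem_comap, MonoidHom.coe_coe, Finset.mem_range,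
    mem_cotrajectory, mem_Ico]
  refine ⟨fun h j ⟨hj₀, hjn⟩ => ?_, fun h i hi => by simpa using h i ⟨by omega, by omega⟩⟩
  lift j to ℕ using hj₀
  simpa using h j (by omega)

theorem comap_cotrajectory (k : ℤ) (s : Set ℤ) :
    (cotrajectory ψ W s).comap ((ψ ^ k : MulAut K) : K →* K) =
      cotrajectory ψ W ((· - k) ⁻¹' s) := by
  ext x
  simp only [Subgroup.mem_comap, MonoidHom.coe_coe, mem_cotrajectory, mem_preimage]
  refine ⟨fun h j hj => ?_, fun h j hj => ?_⟩
  · simpa [← MulAut.mul_apply, ← zpow_add] using h _ hj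
  · simpa [← MulAut.mul_apply, ← zpow_add] using h (j + k) (by simpa using hj)

theorem map_zpow_eq_comap_zpow_neg (H : Subgroup K) (k : ℤ) :
    H.map ((ψ ^ k : MulAut K) : K →* K) = H.comap ((ψ ^ (-k) : MulAut K) : K →* K) := by
  rw [zpow_neg]
  exact Subgroup.map_equiv_eq_comap_symm _ _

theorem map_cotrajectory (k : ℤ) (s : Set ℤ) :
    (cotrajectory ψ W s).map ((ψ ^ k : MulAut K) : K →* K) =
      cotrajectory ψ W ((· + k) ⁻¹' s) := by
  rw [map_zpow_eq_comap_zpow_neg, comap_cotrajectory]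
  simp [sub_eq_add_neg]

theorem iInf_map_cotrajectory {ι : Sort*} (f : ι → ℤ) (s : Set ℤ) :
    ⨅ i, (cotrajectory ψ W s).map ((ψ ^ f i : MulAut K) : K →* K) =
      cotrajectory ψ W (⋃ i, (· + f i) ⁻¹' s) := by
  simp only [map_cotrajectory, cotrajectory_iUnion]

theorem positivePart_cotrajectory (s : Set ℤ) :
    positivePart ψ (cotrajectory ψ W s) = cotrajectory ψ W (⋃ n : ℕ, (· + n) ⁻¹' s) := by
  simp only [positivePart, ← zpow_natCast, iInf_map_cotrajectory]

theorem positivePart_eq : positivePart ψ W = cotrajectory ψ W (Iic 0) := by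
  conv_lhs => rw [← cotrajectory_zero (ψ := ψ) (W := W)]
  rw [positivePart_cotrajectory]
  congr 1
  ext j
  simp only [mem_iUnion, mem_preimage, mem_singleton_iff, mem_Iic]
  exact ⟨fun ⟨n, h⟩ => by omega, fun h => ⟨(-j).toNat, by omega⟩⟩

theorem relIndex_cotrajectory_Iic (k : ℤ) :
    (cotrajectory ψ W (Iic k)).relIndex (cotrajectory ψ W (Iic (k - 1))) =
      (cotrajectory ψ W (Iic 0)).relIndex (cotrajectory ψ W (Iic (-1))) := by
  have shift (l : ℤ) : cotrajectory ψ W (Iic (l + k)) =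
      (cotrajectory ψ W (Iic l)).comap ((ψ ^ k : MulAut K) : K →* K) := by
    simp [comap_cotrajectory]
  have h₀ := shift 0
  have h₁ := shift (-1)
  rw [zero_add] at h₀
  rw [neg_add_eq_sub] at h₁
  rw [h₀, h₁, Subgroup.relIndex_comap,
    Subgroup.map_comap_eq_self_of_surjective (ψ ^ k).surjective]

theorem depth_eq_of_positivePart_eq {V : Subgroup K} {k : ℤ}
    (h : positivePart ψ V = cotrajectory ψ W (Iic k)) :
    depth ψ V = (cotrajectory ψ W (Iic 0)).relIndex (cotrajectory ψ W (Iic (-1))) := by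
  have hmap := map_cotrajectory (ψ := ψ) (W := W) 1 (Iic k)
  rw [zpow_one, preimage_add_const_Iic] at hmap
  rw [depth, h, hmap, relIndex_cotrajectory_Iic]

theorem depth_eq : depth ψ W =
    (cotrajectory ψ W (Iic 0)).relIndex (cotrajectory ψ W (Iic (-1))) :=
  depth_eq_of_positivePart_eq positivePart_eq

theorem depth_cotrajectory_Icc (m : ℕ) :
    depth ψ (cotrajectory ψ W (Icc (-m) m)) = depth ψ W := by
  refine (depth_eq_of_positivePart_eq (k := m) ?_).trans depth_eq.symm
  rw [positivePart_cotrajectory]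
  congr 1
  ext j
  simp only [mem_iUnion, mem_preimage, mem_Icc, mem_Iic]
  exact ⟨fun ⟨n, h⟩ => by omega, fun h => ⟨(m - j).toNat, by omega, by omega⟩⟩

theorem index_cotrajectory_Ico_succ (n : ℕ) :
    (cotrajectory ψ W (Ico 0 (n + 1))).index =
      W.relIndex (cotrajectory ψ W (Ico (-n) 0)) * (cotrajectory ψ W (Ico 0 n)).index := by
  have hIco : Ico (0 : ℤ) (n + 1) = insert (n : ℤ) (Ico 0 (n : ℤ)) := by
    ext j
    simp only [mem_Ico, mem_insert_iff]
    omega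
  have hmap := map_cotrajectory (ψ := ψ) (W := W) n (Ico 0 n)
  rw [preimage_add_const_Ico, zero_sub, sub_self] at hmap
  rw [hIco, cotrajectory_insert, ← Subgroup.relIndex_mul_index inf_le_right,
    Subgroup.inf_relIndex_right, Subgroup.relIndex_comap, hmap]

end Cotrajectory

section Topology

variable {K : Type*} [Group K] [TopologicalSpace K]

theorem continuous_zpow {ψ : MulAut K} (hψ : Continuous ψ)
    (hψ' : Continuous (ψ⁻¹ : MulAut K)) (j : ℤ) : Continuous (ψ ^ j) := by
  let S : Subgroup (MulAut K) :=
    { carrier := {χ | Continuous χ ∧ Continuous (χ⁻¹ : MulAut K)}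
      one_mem' := ⟨continuous_id, continuous_id⟩
      mul_mem' := fun ⟨hχ, hχ'⟩ ⟨hω, hω'⟩ =>
        ⟨hχ.comp hω, by rw [mul_inv_rev]; exact hω'.comp hχ'⟩
      inv_mem' := fun ⟨hχ, hχ'⟩ => ⟨hχ', by rwa [inv_inv]⟩ }
  exact (S.zpow_mem ⟨hψ, hψ'⟩ j).1

variable {ψ : MulAut K} {W : Subgroup K}

theorem isOpen_cotrajectory (hψ : Continuous ψ) (hψ' : Continuous (ψ⁻¹ : MulAut K))
    (hW : IsOpen (W : Set K)) {s : Set ℤ} (hs : s.Finite) :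
    IsOpen (cotrajectory ψ W s : Set K) := by
  simp only [cotrajectory, Subgroup.coe_iInf]
  exact hs.isOpen_biInter fun j _ => hW.preimage (continuous_zpow hψ hψ' j)

theorem isClosed_cotrajectory [IsTopologicalGroup K] (hψ : Continuous ψ)
    (hψ' : Continuous (ψ⁻¹ : MulAut K)) (hW : IsOpen (W : Set K)) (s : Set ℤ) :
    IsClosed (cotrajectory ψ W s : Set K) := by
  simp only [cotrajectory, Subgroup.coe_iInf]
  exact isClosed_biInter fun j _ =>
    (W.isClosed_of_isOpen hW).preimage (continuous_zpow hψ hψ' j)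

end Topology

section Entropy

variable {K : Type*} [Group K] [TopologicalSpace K] [IsTopologicalGroup K] [CompactSpace K]
  {ψ : MulAut K}

theorem tendsto_log_index_iInf_comap (hψ : Continuous ψ) (hψ' : Continuous (ψ⁻¹ : MulAut K))
    {W : Subgroup K} [W.Normal] (hW : IsOpen (W : Set K)) :
    Tendsto (fun n : ℕ => Real.log ((⨅ i ∈ Finset.range n,
        W.comap ((ψ ^ i : MulAut K) : K →* K) : Subgroup K).index) / n)
      atTop (𝓝 (Real.log (depth ψ W))) := by
  simp_rw [iInf_range_comap_pow]
  set D : ℕ → Subgroup K := fun n => cotrajectory ψ W (Ico (-n) 0)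
  have hD : Antitone D := fun m n h =>
    cotrajectory_anti (Ico_subset_Ico (by simpa using h) le_rfl)
  have hDinf : ⨅ n, D n = cotrajectory ψ W (Iic (-1)) := by
    rw [← cotrajectory_iUnion]
    congr 1
    ext j
    simp only [mem_iUnion, mem_Ico, mem_Iic]
    exact ⟨fun ⟨n, h⟩ => by omega, fun h => ⟨(-j).toNat, by omega, by omega⟩⟩
  have hdepth : W.relIndex (⨅ n, D n) = depth ψ W := by
    have hIic : Iic (0 : ℤ) = insert 0 (Iic (-1)) := by
      ext j
      simp only [mem_Iic, mem_insert_iff]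
      omega
    rw [hDinf, depth_eq, hIic, cotrajectory_insert_zero, Subgroup.inf_relIndex_right]
  have hpos (n : ℕ) : 0 < ((cotrajectory ψ W (Ico 0 n)).index : ℝ) :=
    Nat.cast_pos.2 <| Nat.pos_of_ne_zero <| Subgroup.index_ne_zero_of_isOpen <|
      isOpen_cotrajectory hψ hψ' hW (finite_Ico _ _)
  refine Real.tendsto_log_div_of_eventually_mul hpos ?_
  filter_upwards [Subgroup.eventually_relIndex_eq_relIndex_iInf_s18 hW hD
    fun n => isClosed_cotrajectory hψ hψ' hW _] with n hn
  rw [Nat.cast_succ, index_cotrajectory_Ico_succ, hn, hdepth, Nat.cast_mul]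

theorem log_index_iInf_comap_div_le (hψ : Continuous ψ) (hψ' : Continuous (ψ⁻¹ : MulAut K))
    {V V' : Subgroup K} (hV' : IsOpen (V' : Set K)) (hle : V' ≤ V) (n : ℕ) :
    Real.log ((⨅ i ∈ Finset.range n, V.comap ((ψ ^ i : MulAut K) : K →* K) :
        Subgroup K).index) / n ≤
      Real.log ((⨅ i ∈ Finset.range n, V'.comap ((ψ ^ i : MulAut K) : K →* K) :
        Subgroup K).index) / n := by
  simp only [iInf_range_comap_pow]
  have hle' : cotrajectory ψ V' (Ico 0 n) ≤ cotrajectory ψ V (Ico 0 n) :=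
    iInf₂_mono fun _ _ => Subgroup.comap_mono hle
  have hV_pos : 0 < ((cotrajectory ψ V (Ico 0 n)).index : ℝ) :=
    Nat.cast_pos.2 <| Nat.pos_of_ne_zero <| Subgroup.index_ne_zero_of_isOpen <|
      isOpen_cotrajectory hψ hψ' (Subgroup.isOpen_mono hle hV') (finite_Ico _ _)
  have : (cotrajectory ψ V' (Ico 0 n)).FiniteIndex := ⟨Subgroup.index_ne_zero_of_isOpen <|
    isOpen_cotrajectory hψ hψ' hV' (finite_Ico _ _)⟩
  gcongr

theorem exists_cotrajectory_Icc_le (hψ : Continuous ψ) (hψ' : Continuous (ψ⁻¹ : MulAut K))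
    {U : Subgroup K} (hU : IsOpen (U : Set K))
    (hanti : ⨅ n : ℤ, U.map ((ψ ^ n : MulAut K) : K →* K) = ⊥)
    {V : Subgroup K} (hV : IsOpen (V : Set K)) :
    ∃ m : ℕ, cotrajectory ψ U (Icc (-m) m) ≤ V := by
  have hbot : ⨅ m : ℕ, cotrajectory ψ U (Icc (-m) m) = ⊥ := by
    have h := iInf_map_cotrajectory (ψ := ψ) (W := U) (fun n : ℤ => n) {0}
    rw [cotrajectory_zero, hanti] at h
    rw [← cotrajectory_iUnion, h]
    congr 1
    ext j
    simp only [mem_iUnion, mem_Icc, mem_preimage, mem_singleton_iff]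
    exact ⟨fun ⟨m, h⟩ => ⟨-j, by omega⟩, fun ⟨i, h⟩ => ⟨j.natAbs, by omega, by omega⟩⟩
  exact Subgroup.exists_le_of_iInf_le
    (fun m n h => cotrajectory_anti (Icc_subset_Icc (by simpa using h) (by simpa using h)))
    (fun m => isClosed_cotrajectory hψ hψ' hU _) hV (hbot ▸ bot_le)

end Entropy

end MulAut

theorem statement18_general {K : Type*} [Group K] [TopologicalSpace K] [IsTopologicalGroup K]
    [CompactSpace K]
    (ψ : MulAut K) (hψ : Continuous ψ) (hψ' : Continuous (ψ⁻¹ : MulAut K))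
    (U : Subgroup K) [U.Normal] (hU : IsOpen (U : Set K))
    (hanti : (⨅ n : ℤ, U.map ((ψ ^ n : MulAut K) : K →* K)) = (⊥ : Subgroup K))
    (Up : Subgroup K) (hUp : Up = ⨅ n : ℕ, U.map ((ψ ^ n : MulAut K) : K →* K))
    (Htop : Subgroup K → ℝ)
    (hHtop : ∀ V : Subgroup K, IsOpen (V : Set K) →
      Tendsto
        (fun n : ℕ =>
          Real.log ((⨅ i ∈ Finset.range n, V.comap ((ψ ^ i : MulAut K) : K →* K) :
            Subgroup K).index) / n)
        atTop (𝓝 (Htop V))) :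
    (⨆ (V : Subgroup K) (_ : IsOpen (V : Set K)), ENNReal.ofReal (Htop V)) =
      ENNReal.ofReal (Real.log (Up.relIndex (Up.map (ψ : K →* K)))) := by
  have hlim (W : Subgroup K) [W.Normal] (hW : IsOpen (W : Set K)) :
      Htop W = Real.log (ψ.depth W) :=
    tendsto_nhds_unique (hHtop W hW) (MulAut.tendsto_log_index_iInf_comap hψ hψ' hW)
  have hdepth : Up.relIndex (Up.map (ψ : K →* K)) = ψ.depth U := by rw [hUp]; rfl
  rw [hdepth]
  refine le_antisymm (iSup₂_le fun V hV => ?_) ?_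
  · obtain ⟨m, hm⟩ := MulAut.exists_cotrajectory_Icc_le hψ hψ' hU hanti hV
    have hUm := MulAut.isOpen_cotrajectory hψ hψ' hU (finite_Icc (-m : ℤ) m)
    have hle : Htop V ≤ Htop (ψ.cotrajectory U (Icc (-m) m)) :=
      le_of_tendsto_of_tendsto' (hHtop V hV) (hHtop _ hUm)
        (MulAut.log_index_iInf_comap_div_le hψ hψ' hUm hm)
    rw [hlim _ hUm, MulAut.depth_cotrajectory_Icc] at hle
    exact ENNReal.ofReal_le_ofReal hle
  · rw [← hlim U hU]
    exact le_iSup₂_of_le U hU le_rfl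

/-- `K` totally disconnected compact group, `ψ` a topological automorphism such
that `(K,ψ)` has finite depth, witnessed by an antistable open normal subgroup `U`
(`⋂_{n∈ℤ} ψ^n(U) = {1}`).  Then `h_top(ψ) = log depth(ψ)`, where
`depth(ψ) = [ψ(U₊) : U₊]` with `U₊ = ⋂_{n≥0} ψ^n(U)`, and `h_top(ψ)` is the sup over open
subgroups `V` of `H_top(ψ,V) = lim_n log[K : C_n(ψ,V)]/n`. -/
theorem statement18 {K : Type*} [Group K] [TopologicalSpace K] [IsTopologicalGroup K]
    [CompactSpace K] [TotallyDisconnectedSpace K]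
    (ψ : MulAut K) (hψ : Continuous ψ) (hψ' : Continuous (ψ⁻¹ : MulAut K))
    (U : Subgroup K) [U.Normal] (hU : IsOpen (U : Set K))
    (hanti : (⨅ n : ℤ, U.map ((ψ ^ n : MulAut K) : K →* K)) = (⊥ : Subgroup K))
    (Up : Subgroup K) (hUp : Up = ⨅ n : ℕ, U.map ((ψ ^ n : MulAut K) : K →* K))
    (Htop : Subgroup K → ℝ)
    (hHtop : ∀ V : Subgroup K, IsOpen (V : Set K) →
      Tendsto
        (fun n : ℕ =>
          Real.log ((⨅ i ∈ Finset.range n, V.comap ((ψ ^ i : MulAut K) : K →* K) :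
            Subgroup K).index) / n)
        atTop (𝓝 (Htop V))) :
    (⨆ (V : Subgroup K) (_ : IsOpen (V : Set K)), ENNReal.ofReal (Htop V)) =
      ENNReal.ofReal (Real.log (Up.relIndex (Up.map (ψ : K →* K)))) :=
  statement18_general ψ hψ hψ' U hU hanti Up hUp Htop hHtop
end
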